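/- Let T be a spanning tree on p vertices with incidence matrix B and Ψ = diag(σ_1²,...,σ²_{p-1}) with all σ_s² > 0. Then for any ε > 0, the matrix Ω̃ = BΨ^{-1}B^T + εJ is positive definite and det(Ω̃) = p²·ε·det(Ψ^{-1}) = p²·ε·Π_{s=1}^{p-1} σ_s^{-2}, where J is the p×p all-ones matrix. -/

import Mathlib

open scoped Classical

/-- Oriented incidence matrix of a graph on `n+1` vertices with `n` edges. -/
noncomputable def incidenceMat (n : ℕ) (e : Fin n → Fin (n + 1) × Fin (n + 1)) :
    Matrix (Fin (n + 1)) (Fin n) ℝ :=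
  Matrix.of fun j s => if (e s).1 = j then 1 else if (e s).2 = j then -1 else 0

/-!
With `M = [𝟙 | B]` (the incidence matrix with a column of ones in front) and
`D = diag(ε, σ₁⁻², …, σₙ⁻²)` one has `Ω̃ = M D Mᵀ`, so `Ω̃` is positive definite as soon as `M` is
invertible, and `det Ω̃ = (det M)² ε ∏ σ_s⁻²`. Every column of `B` sums to zero, so adding all rows
of `M` to the first one leaves `(n + 1, 0, …, 0)` there, and `det M = (n + 1) det B₀`, where `B₀`
is `B` without the row of vertex `0`. Finally `B₀` is unimodular: summing signed edge columns
along a path from `0` to `v` in the tree gives an integer vector `x` with `B x = δ_v - δ_0`, so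
`B₀` is surjective on `ℤⁿ` and `det B₀ = ±1`.
-/

open Matrix

section OrientedIncidence

variable (R : Type*) {V E : Type*} [DecidableEq V] (e : E → V × V)

def orientedIncidence [Ring R] : Matrix V E R :=
  of fun v s => if (e s).1 = v then 1 else if (e s).2 = v then -1 else 0

abbrev edgeGraph : SimpleGraph V :=
  SimpleGraph.fromEdgeSet {x | ∃ s, x = s((e s).1, (e s).2)}

variable {R} {e}

theorem orientedIncidence_col [Ring R] {s : E} (hs : (e s).1 ≠ (e s).2) :
    (orientedIncidence R e).col s = Pi.single (e s).1 1 - Pi.single (e s).2 1 := by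
  ext v
  by_cases h1 : (e s).1 = v <;> by_cases h2 : (e s).2 = v <;>
    simp_all [orientedIncidence, Pi.single_apply, eq_comm]

theorem sum_orientedIncidence_apply [Ring R] [Fintype V] {s : E} (hs : (e s).1 ≠ (e s).2) :
    ∑ v, orientedIncidence R e v s = 0 := by
  simpa [Finset.sum_sub_distrib] using congrArg (∑ v, · v) (orientedIncidence_col (R := R) hs)

variable (e)

theorem orientedIncidence_map [Ring R] {S : Type*} [Ring S] (f : R →+* S) :
    (orientedIncidence R e).map f = orientedIncidence S e := by
  ext v s
  simp only [orientedIncidence, map_apply, of_apply]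
  split_ifs <;> simp

theorem single_sub_single_mem_range_of_reachable [CommRing R] [Fintype E] {u v : V}
    (h : (edgeGraph e).Reachable u v) :
    Pi.single v 1 - Pi.single u 1 ∈ LinearMap.range (orientedIncidence R e).mulVecLin := by
  obtain ⟨w⟩ := h
  induction w with
  | nil => simp
  | @cons u b v hadj _ ih =>
    rw [← sub_add_sub_cancel (Pi.single v 1) (Pi.single b 1)]
    refine add_mem ih ?_
    obtain ⟨⟨s, hs⟩, hub⟩ := (SimpleGraph.fromEdgeSet_adj _).mp hadj
    have hcol :
        (orientedIncidence R e).col s ∈ LinearMap.range (orientedIncidence R e).mulVecLin := by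
      rw [range_mulVecLin]
      exact Submodule.subset_span (Set.mem_range_self s)
    rcases Sym2.eq_iff.mp hs with ⟨rfl, rfl⟩ | ⟨rfl, rfl⟩
    · rw [orientedIncidence_col hub] at hcol
      simpa using neg_mem hcol
    · rw [orientedIncidence_col hub.symm] at hcol
      exact hcol

end OrientedIncidence

section Tree

variable {R : Type*} [CommRing R] {n : ℕ} (e : Fin n → Fin (n + 1) × Fin (n + 1))

theorem isUnit_det_orientedIncidence_submatrix_succ (h : (edgeGraph e).Connected) :
    IsUnit ((orientedIncidence R e).submatrix Fin.succ id).det := by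
  rw [← isUnit_iff_isUnit_det, ← mulVec_surjective_iff_isUnit]
  suffices LinearMap.range ((orientedIncidence R e).submatrix Fin.succ id).mulVecLin = ⊤ from
    LinearMap.range_eq_top.mp this
  rw [eq_top_iff, ← (Pi.basisFun R (Fin n)).span_eq, Submodule.span_le]
  rintro _ ⟨k, rfl⟩
  obtain ⟨x, hx⟩ := single_sub_single_mem_range_of_reachable (R := R) e (h.preconnected 0 k.succ)
  refine ⟨x, funext fun j => ?_⟩
  simpa [Pi.single_apply, Fin.succ_ne_zero, mulVec] using congrFun hx j.succ

theorem det_orientedIncidence_submatrix_succ_sq (h : (edgeGraph e).Connected) :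
    ((orientedIncidence R e).submatrix Fin.succ id).det ^ 2 = 1 := by
  have := congrArg (Int.castRingHom R)
    (Int.isUnit_sq (isUnit_det_orientedIncidence_submatrix_succ e h))
  rwa [map_pow, RingHom.map_det, RingHom.mapMatrix_apply, ← submatrix_map,
    orientedIncidence_map, map_one] at this

end Tree

section OnesColumn

variable {R : Type*} [CommRing R] {m : Type*} {n : ℕ}

def withOnesCol (B : Matrix m (Fin n) R) : Matrix m (Fin (n + 1)) R :=
  of fun v => Fin.cons 1 (B v)

theorem withOnesCol_mul_diagonal_mul_transpose [Fintype m] (B : Matrix m (Fin n) R) (c : R)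
    (d : Fin n → R) :
    withOnesCol B * diagonal (Fin.cons c d) * (withOnesCol B)ᵀ =
      B * diagonal d * Bᵀ + of fun _ _ => c := by
  ext u v
  rw [Matrix.add_apply, mul_apply, mul_apply, Fin.sum_univ_succ]
  simp [withOnesCol, mul_diagonal, add_comm]

theorem det_withOnesCol {B : Matrix (Fin (n + 1)) (Fin n) R} (hB : ∀ s, ∑ v, B v s = 0) :
    (withOnesCol B).det = (n + 1) * (B.submatrix Fin.succ id).det := by
  have hrow : ∑ v, withOnesCol B v = Pi.single 0 ((n : R) + 1) := by
    ext i
    refine (Finset.sum_apply i _ _).trans ?_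
    refine Fin.cases ?_ (fun s => ?_) i <;> simp [withOnesCol, hB]
  have hminor : ((withOnesCol B).updateRow 0 (Pi.single 0 ((n : R) + 1))).submatrix
      Fin.succ Fin.succ = B.submatrix Fin.succ id := by
    ext i j
    simp [withOnesCol, Fin.succ_ne_zero]
  have hdet := det_updateRow_sum (withOnesCol B) 0 1
  simp only [Pi.one_apply, one_smul, hrow] at hdet
  rw [← hdet, det_succ_row_zero, Fin.sum_univ_succ]
  simp [hminor, Fin.succ_ne_zero]

end OnesColumn

/-- For a spanning tree with incidence matrix `B` and `Ψ = diag(σ²)`, `σ_s² > 0`, and any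
`ε > 0`, the matrix `Ω̃ = BΨ⁻¹Bᵀ + εJ` is positive definite with
`det Ω̃ = p² ε ∏_s σ_s⁻²`. -/
theorem stmt7 (n : ℕ) (e : Fin n → Fin (n + 1) × Fin (n + 1))
    (he : ∀ s, (e s).1 ≠ (e s).2)
    (G : SimpleGraph (Fin (n + 1)))
    (hG : G = SimpleGraph.fromEdgeSet {x | ∃ s, x = s((e s).1, (e s).2)})
    (hT : G.IsTree)
    (σ : Fin n → ℝ) (hσ : ∀ s, 0 < σ s) (ε : ℝ) (hε : 0 < ε) :
    let B := incidenceMat n e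
    let Ω : Matrix (Fin (n + 1)) (Fin (n + 1)) ℝ :=
      B * Matrix.diagonal (fun s => (σ s ^ 2)⁻¹) * B.transpose +
        Matrix.of fun _ _ => ε
    Ω.PosDef ∧ Ω.det = ((n : ℝ) + 1) ^ 2 * ε * ∏ s, (σ s ^ 2)⁻¹ := by
  intro B Ω
  subst hG
  -- `B` is `orientedIncidence ℝ e` by definition.
  set M := withOnesCol (orientedIncidence ℝ e)
  set d : Fin (n + 1) → ℝ := Fin.cons ε fun s => (σ s ^ 2)⁻¹
  have hΩ : Ω = M * diagonal d * Mᵀ :=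
    (withOnesCol_mul_diagonal_mul_transpose _ ε _).symm
  have hM : M.det ^ 2 = ((n : ℝ) + 1) ^ 2 := by
    rw [det_withOnesCol fun s => sum_orientedIncidence_apply (he s), mul_pow,
      det_orientedIncidence_submatrix_succ_sq e hT.connected, mul_one]
  have hd : ∀ i, 0 < d i := Fin.cases hε fun s => by simp [d, hσ s]
  constructor
  · have hMunit : IsUnit M := by
      rw [isUnit_iff_isUnit_det, isUnit_iff_ne_zero, ← pow_ne_zero_iff two_ne_zero, hM]
      positivity
    rw [hΩ, ← conjTranspose_eq_transpose_of_trivial, ← star_eq_conjTranspose,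
      IsUnit.posDef_star_right_conjugate_iff hMunit]
    exact posDef_diagonal_iff.mpr hd
  · rw [hΩ, det_mul, det_mul, det_transpose, det_diagonal, Fin.prod_univ_succ]
    simp only [d, Fin.cons_zero, Fin.cons_succ]
    linear_combination (ε * ∏ s, (σ s ^ 2)⁻¹) * hM
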